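/- For n > 3 and positive reals ℓ₁ ≤ ⋯ ≤ ℓ_{n-1}, if the set {n−3, n−2} is long with respect to ℓ (i.e. ℓ_{n-3} + ℓ_{n-2} > (1/2)∑_{i=1}^n ℓᵢ), then d_{n-3}(ℓ) = 1, i.e. there is exactly one (n−2)-element subset of {1,…,n} containing both n−1 and n that is short with respect to ℓ, namely the complement of {n−3, n−2}. -/

import Mathlib

/-!
Write `J = {a, b}ᶜ` with `a, b ≤ n - 3` (0-based). If `J` is short, then `J` cannot contain
three distinct indices `c, d, n - 1` with `ℓ a ≤ ℓ c` and `ℓ b ≤ ℓ d`: together with the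
positivity of `ℓ (n - 1)` they would make `J` outweigh its complement. Monotonicity of `ℓ`
therefore keeps `n - 3`, and then `n - 4`, out of `J`, so `{a, b} = {n - 4, n - 3}`. That this
complement is short is exactly the hypothesis that `{n - 4, n - 3}` is long.
-/

open Finset

section Short

variable {ι : Type*} [Fintype ι] [DecidableEq ι]

def IsShort (ℓ : ι → ℝ) (J : Finset ι) : Prop :=
  ∑ i ∈ J, ℓ i < ∑ i ∈ Jᶜ, ℓ i

theorem isShort_compl_iff {ℓ : ι → ℝ} {J : Finset ι} :
    IsShort ℓ Jᶜ ↔ (1 / 2) * ∑ i, ℓ i < ∑ i ∈ J, ℓ i := by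
  have htotal := sum_add_sum_compl J ℓ
  rw [IsShort, compl_compl]
  constructor <;> intro h <;> linarith

theorem not_isShort_of_sum_compl_le {ℓ : ι → ℝ} (hnonneg : ∀ i, 0 ≤ ℓ i) {J : Finset ι}
    {c d e : ι} (hc : c ∈ J) (hd : d ∈ J) (he : e ∈ J) (hcd : c ≠ d) (hce : c ≠ e)
    (hde : d ≠ e) (he_pos : 0 < ℓ e) (hle : ∑ i ∈ Jᶜ, ℓ i ≤ ℓ c + ℓ d) :
    ¬ IsShort ℓ J := by
  have hsub : ({c, d, e} : Finset ι) ⊆ J := by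
    simp only [insert_subset_iff, singleton_subset_iff]
    exact ⟨hc, hd, he⟩
  have hthree : ℓ c + ℓ d + ℓ e ≤ ∑ i ∈ J, ℓ i := by
    calc ℓ c + ℓ d + ℓ e = ∑ i ∈ ({c, d, e} : Finset ι), ℓ i := by
          rw [sum_insert (by simp [hcd, hce]), sum_pair hde, add_assoc]
      _ ≤ ∑ i ∈ J, ℓ i := sum_le_sum_of_subset_of_nonneg hsub fun i _ _ => hnonneg i
  rw [IsShort, not_lt]
  linarith

end Short

section LastFour

variable {n : ℕ} {ℓ : Fin n → ℝ} {p4 p3 p2 p1 : Fin n}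

theorem compl_eq_pair_of_isShort (hn : 3 < n) (hpos : ∀ i, 0 < ℓ i)
    (hmono : ∀ i j : Fin n, (i : ℕ) ≤ (j : ℕ) → (j : ℕ) < n - 1 → ℓ i ≤ ℓ j)
    (v4 : (p4 : ℕ) = n - 4) (v3 : (p3 : ℕ) = n - 3) (v2 : (p2 : ℕ) = n - 2)
    (v1 : (p1 : ℕ) = n - 1) {J : Finset (Fin n)} (hcard : #J = n - 2) (h2 : p2 ∈ J)
    (h1 : p1 ∈ J) (hshort : IsShort ℓ J) : Jᶜ = {p4, p3} := by
  have hnonneg : ∀ i, 0 ≤ ℓ i := fun i => (hpos i).le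
  have hcard_compl : #Jᶜ = 2 := by rw [card_compl, hcard, Fintype.card_fin]; omega
  have hle : ∀ x ∉ J, (x : ℕ) ≤ n - 3 := by
    intro x hx
    have hx2 : (x : ℕ) ≠ p2 := fun h => hx (Fin.ext h ▸ h2)
    have hx1 : (x : ℕ) ≠ p1 := fun h => hx (Fin.ext h ▸ h1)
    omega
  have h3 : p3 ∉ J := by
    intro h3
    obtain ⟨a, b, hab, hJ⟩ := card_eq_two.mp hcard_compl
    have ha := hle a (mem_compl.mp (by simp [hJ]))
    have hb := hle b (mem_compl.mp (by simp [hJ]))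
    refine not_isShort_of_sum_compl_le hnonneg h3 h2 h1 ?_ ?_ ?_ (hpos p1) ?_ hshort
    · exact Fin.ne_of_val_ne (by omega)
    · exact Fin.ne_of_val_ne (by omega)
    · exact Fin.ne_of_val_ne (by omega)
    · rw [hJ, sum_pair hab]
      exact add_le_add (hmono a p3 (by omega) (by omega)) (hmono b p2 (by omega) (by omega))
  have h4 : p4 ∉ J := by
    intro h4
    obtain ⟨b, h3b, hJ⟩ : ∃ b, p3 ≠ b ∧ Jᶜ = {p3, b} := by
      obtain ⟨x, y, hxy, hJ⟩ := card_eq_two.mp hcard_compl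
      have : p3 ∈ ({x, y} : Finset (Fin n)) := hJ ▸ mem_compl.mpr h3
      simp only [mem_insert, mem_singleton] at this
      rcases this with rfl | rfl
      · exact ⟨y, hxy, hJ⟩
      · exact ⟨x, hxy.symm, hJ.trans (pair_comm x p3)⟩
    have hbJ : b ∉ J := mem_compl.mp (by simp [hJ])
    have hb := hle b hbJ
    have hb4 : (b : ℕ) ≠ p4 := fun h => hbJ (Fin.ext h ▸ h4)
    have h3b' : (p3 : ℕ) ≠ b := Fin.val_ne_of_ne h3b
    refine not_isShort_of_sum_compl_le hnonneg h2 h4 h1 ?_ ?_ ?_ (hpos p1) ?_ hshort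
    · exact Fin.ne_of_val_ne (by omega)
    · exact Fin.ne_of_val_ne (by omega)
    · exact Fin.ne_of_val_ne (by omega)
    · rw [hJ, sum_pair h3b]
      exact add_le_add (hmono p3 p2 (by omega) (by omega)) (hmono b p4 (by omega) (by omega))
  have hsub : ({p4, p3} : Finset (Fin n)) ⊆ Jᶜ := by
    simp only [insert_subset_iff, singleton_subset_iff, mem_compl]
    exact ⟨h4, h3⟩
  have h43 : p4 ≠ p3 := Fin.ne_of_val_ne (by omega)
  exact (eq_of_subset_of_card_le hsub (by rw [hcard_compl, card_pair h43])).symm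

end LastFour

/-- For `n > 3` and ordered positive `ℓ`: if the set `{n-3, n-2}` (0-based
indices `n-4, n-3`) is long with respect to `ℓ`, then there is exactly one
`(n-2)`-element subset of `{1,…,n}` containing both `n-1` and `n` (0-based
indices `n-2`, `n-1`) that is short with respect to `ℓ`, namely the complement
of `{n-3, n-2}`; in particular `d_{n-3}(ℓ) = 1`. -/
theorem stmt6 (n : ℕ) (hn : 3 < n) (ℓ : Fin n → ℝ) (hpos : ∀ i, 0 < ℓ i)
    (hmono : ∀ i j : Fin n, (i : ℕ) ≤ (j : ℕ) → (j : ℕ) < n - 1 → ℓ i ≤ ℓ j)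
    (hlong : (1 / 2) * ∑ i, ℓ i < ℓ ⟨n - 4, by omega⟩ + ℓ ⟨n - 3, by omega⟩) :
    {J : Finset (Fin n) | J.card = n - 2 ∧ (⟨n - 2, by omega⟩ : Fin n) ∈ J ∧
        (⟨n - 1, by omega⟩ : Fin n) ∈ J ∧ ∑ i ∈ J, ℓ i < ∑ i ∈ Jᶜ, ℓ i}
      = {({⟨n - 4, by omega⟩, ⟨n - 3, by omega⟩} : Finset (Fin n))ᶜ} := by
  have h43 : (⟨n - 4, by omega⟩ : Fin n) ≠ ⟨n - 3, by omega⟩ := by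
    simp only [ne_eq, Fin.mk.injEq]; omega
  ext J
  simp only [Set.mem_ofPred_eq, Set.mem_singleton_iff]
  constructor
  · rintro ⟨hcard, h2, h1, hshort⟩
    rw [← compl_compl J]
    exact congrArg _ (compl_eq_pair_of_isShort hn hpos hmono rfl rfl rfl rfl hcard h2 h1 hshort)
  · rintro rfl
    refine ⟨?_, ?_, ?_, ?_⟩
    · rw [card_compl, card_pair h43, Fintype.card_fin]
    · simp only [mem_compl, mem_insert, mem_singleton, Fin.mk.injEq]; omega
    · simp only [mem_compl, mem_insert, mem_singleton, Fin.mk.injEq]; omega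
    · exact isShort_compl_iff.mpr (by rwa [sum_pair h43])
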